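/- There exists an orthogonal projection P on one factor and an incomplete set S of orthonormal product vectors in C³⊗C⁶ such that some nonzero image (I⊗P)|ψ⟩, ψ ∈ S, is not a scalar multiple of any member of S. Concretely, with P the projection of C⁶ onto span{|0⟩,|1⟩,|2⟩} and ψ = |0⟩⊗(|0⟩−|1⟩+|4⟩−|5⟩)/2 ∈ S₂, the image (I⊗P)ψ = |0⟩⊗(|0⟩−|1⟩)/2 is nonzero and not proportional to any element of S₂. -/

import Mathlib

open scoped InnerProductSpace ComplexOrder

noncomputable section

/-- Tensor product of two vectors in the composite Euclidean (Hilbert) space. -/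
def tmul {m n : ℕ} (a : Fin m → ℂ) (b : Fin n → ℂ) :
    EuclideanSpace ℂ (Fin m × Fin n) := WithLp.toLp 2 (fun p : Fin m × Fin n => a p.1 * b p.2)

/-- Standard basis ket of C³. -/
def ket (i : Fin 3) : Fin 3 → ℂ := fun k => if k = i then 1 else 0

/-- `(|i⟩ − |j⟩)/√2` in C³. -/
def minusK (i j : Fin 3) : Fin 3 → ℂ := (Real.sqrt 2 : ℂ)⁻¹ • (ket i - ket j)

/-- `(|0⟩ + |1⟩ + |2⟩)/√3` in C³. -/
def sumK : Fin 3 → ℂ := (Real.sqrt 3 : ℂ)⁻¹ • (ket 0 + ket 1 + ket 2)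

/-- Standard basis ket of C⁶. -/
def ket6 (i : Fin 6) : Fin 6 → ℂ := fun k => if k = i then 1 else 0

/-- Alice's local parts of the set S₂. -/
def S2A : Fin 5 → Fin 3 → ℂ := ![ket 0, ket 2, minusK 1 2, minusK 0 1, sumK]

/-- Bob's local parts of the set S₂. -/
def S2B : Fin 5 → Fin 6 → ℂ :=
  ![(2 : ℂ)⁻¹ • (ket6 0 - ket6 1 + ket6 4 - ket6 5),
    (2 : ℂ)⁻¹ • (ket6 1 - ket6 2 + ket6 5 - ket6 3),
    (Real.sqrt 2 : ℂ)⁻¹ • (ket6 0 - ket6 4),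
    (Real.sqrt 2 : ℂ)⁻¹ • (ket6 2 - ket6 3),
    (Real.sqrt 6 : ℂ)⁻¹ • (ket6 0 + ket6 1 + ket6 2 + ket6 3 + ket6 4 + ket6 5)]

/-- The five product states of S₂ in C³ ⊗ C⁶. -/
def S2 : Fin 5 → EuclideanSpace ℂ (Fin 3 × Fin 6) := fun i => tmul (S2A i) (S2B i)

/-- The orthogonal projection of C⁶ onto span{|0⟩,|1⟩,|2⟩}. -/
def K1 : Matrix (Fin 6) (Fin 6) ℂ := Matrix.diagonal ![1, 1, 1, 0, 0, 0]

/-- With K₁ the projection of C⁶ onto span{|0⟩,|1⟩,|2⟩} and ψ the first state of S₂,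
the image (I⊗K₁)ψ = |0⟩⊗(|0⟩−|1⟩)/2 is nonzero and not proportional to any member of S₂:
incompleteness permits new product directions under OPLPM. -/
theorem stmt13 :
    tmul (S2A 0) (K1.mulVec (S2B 0)) ≠ 0 ∧
      ∀ (i : Fin 5) (c : ℂ), tmul (S2A 0) (K1.mulVec (S2B 0)) ≠ c • S2 i := by
  have hv : ∀ p : Fin 3 × Fin 6, tmul (S2A 0) (K1.mulVec (S2B 0)) p =
      (if p = (0,0) then (2:ℂ)⁻¹ else if p = (0,1) then -(2:ℂ)⁻¹ else 0) := by
    intro p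
    fin_cases p <;>
      simp [tmul, S2A, S2B, K1, ket, ket6, Matrix.mulVec, Matrix.diagonal,
        dotProduct, Fin.sum_univ_six, Prod.ext_iff] <;>
      norm_num [Prod.ext_iff, Matrix.cons_val_succ] <;> rfl
  constructor
  · intro h
    have : tmul (S2A 0) (K1.mulVec (S2B 0)) (0,0) = (0 : EuclideanSpace ℂ (Fin 3 × Fin 6)) (0,0) := by rw [h]
    rw [hv] at this
    simp at this
  · intro i c h
    have h0 : tmul (S2A 0) (K1.mulVec (S2B 0)) (0,0) = (c • S2 i) (0,0) := by rw [h]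
    have h1 : tmul (S2A 0) (K1.mulVec (S2B 0)) (0,1) = (c • S2 i) (0,1) := by rw [h]
    have h4 : tmul (S2A 0) (K1.mulVec (S2B 0)) ((0:Fin 3),(4:Fin 6)) = (c • S2 i) ((0:Fin 3),(4:Fin 6)) := by rw [h]
    rw [hv] at h0 h1 h4
    have s2 : (Real.sqrt 2 : ℂ) ≠ 0 := by
      norm_cast; positivity
    have s3 : (Real.sqrt 3 : ℂ) ≠ 0 := by
      norm_cast; positivity
    have s6 : (Real.sqrt 6 : ℂ) ≠ 0 := by
      norm_cast; positivity
    norm_num [Prod.ext_iff] at h0 h1 h4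
    clear hv h
    fin_cases i <;>
      simp [S2, tmul, S2A, S2B, ket, ket6, minusK, sumK, PiLp.smul_apply,
        smul_eq_mul, Matrix.cons_val_succ, Prod.ext_iff] at h0 h1 h4
    all_goals simp_all

end
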